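/- arXiv:1905.04999 — 2 statements merged into one kernel-verified Lean document; each statement's English description precedes it below -/
import Mathlib

section
/- (Periodicity of the Floquet eigenvectors.) If x₀ is T-periodic and b(T) ≠ 1, then α(t + T) = α(t) · e^{μ₂ T} and β(t + T) = β(t) · e^{μ₂ T} for all t; consequently both u₁(t) := f(x₀(t)) and u₂(t) := e^{−μ₂ t}(α(t) f(x₀(t)) + β(t) f⊥(x₀(t))) are T-periodic functions of t. -/
open Matrix

noncomputable section

/-- The perpendicular vector field on ℝ²: `(v₁, v₂) ↦ (v₂, −v₁)`. -/
def perp (v : Fin 2 → ℝ) : Fin 2 → ℝ := ![v 1, -v 0]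

/-- The Jacobian matrix of `f : ℝ² → ℝ²` at a point `x`: entry `(i, j)` is `∂fᵢ/∂xⱼ (x)`. -/
def jac (f : (Fin 2 → ℝ) → (Fin 2 → ℝ)) (x : Fin 2 → ℝ) : Matrix (Fin 2) (Fin 2) ℝ :=
  Matrix.of fun i j => fderiv ℝ f x (Pi.single j 1) i

/-- The divergence of `f : ℝ² → ℝ²`, i.e. the trace of its Jacobian. -/
def divg (f : (Fin 2 → ℝ) → (Fin 2 → ℝ)) (x : Fin 2 → ℝ) : ℝ := (jac f x).trace

/-- Diliberto's function `b(t) = exp(∫₀ᵗ (div f)(x₀ s) ds)`. -/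
def bD (f : (Fin 2 → ℝ) → (Fin 2 → ℝ)) (x₀ : ℝ → (Fin 2 → ℝ)) (t : ℝ) : ℝ :=
  Real.exp (∫ s in (0:ℝ)..t, divg f (x₀ s))

/-- Diliberto's function
`a(t) = ∫₀ᵗ [f(x₀ s)ᵀ (A s + (A s)ᵀ) f⊥(x₀ s) / ‖f(x₀ s)‖⁴] b(s) ds`
(here `‖v‖² = v ⬝ᵥ v` is the square of the euclidean norm). -/
def aD (f : (Fin 2 → ℝ) → (Fin 2 → ℝ)) (x₀ : ℝ → (Fin 2 → ℝ)) (t : ℝ) : ℝ :=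
  ∫ s in (0:ℝ)..t,
    (f (x₀ s) ⬝ᵥ ((jac f (x₀ s) + (jac f (x₀ s))ᵀ).mulVec (perp (f (x₀ s)))) /
      (f (x₀ s) ⬝ᵥ f (x₀ s)) ^ 2) * bD f x₀ s

/-- The second Floquet exponent `μ₂ = (1/T) ∫₀ᵀ (div f)(x₀ s) ds`. -/
def mu2D (f : (Fin 2 → ℝ) → (Fin 2 → ℝ)) (x₀ : ℝ → (Fin 2 → ℝ)) (T : ℝ) : ℝ :=
  (1 / T) * ∫ s in (0:ℝ)..T, divg f (x₀ s)

/-- `α(t) = a(T)/(b(T) − 1) + a(t)`. -/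
def alphaD (f : (Fin 2 → ℝ) → (Fin 2 → ℝ)) (x₀ : ℝ → (Fin 2 → ℝ)) (T t : ℝ) : ℝ :=
  aD f x₀ T / (bD f x₀ T - 1) + aD f x₀ t

/-- `β(t) = b(t)/‖f(x₀ t)‖²` (with `‖v‖² = v ⬝ᵥ v`). -/
def betaD (f : (Fin 2 → ℝ) → (Fin 2 → ℝ)) (x₀ : ℝ → (Fin 2 → ℝ)) (t : ℝ) : ℝ :=
  bD f x₀ t / (f (x₀ t) ⬝ᵥ f (x₀ t))

/-- First Floquet eigenvector `u₁(t) = f(x₀ t)`. -/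
def u1D (f : (Fin 2 → ℝ) → (Fin 2 → ℝ)) (x₀ : ℝ → (Fin 2 → ℝ)) (t : ℝ) : Fin 2 → ℝ :=
  f (x₀ t)

/-- Second Floquet eigenvector `u₂(t) = e^{−μ₂ t} (α(t) f(x₀ t) + β(t) f⊥(x₀ t))`. -/
def u2D (f : (Fin 2 → ℝ) → (Fin 2 → ℝ)) (x₀ : ℝ → (Fin 2 → ℝ)) (T t : ℝ) : Fin 2 → ℝ :=
  Real.exp (-(mu2D f x₀ T) * t) •
    (alphaD f x₀ T t • f (x₀ t) + betaD f x₀ t • perp (f (x₀ t)))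

/-- First covector `v₁(t) = (1/b(t)) (−α(t) f⊥(x₀ t) + β(t) f(x₀ t))`. -/
def v1D (f : (Fin 2 → ℝ) → (Fin 2 → ℝ)) (x₀ : ℝ → (Fin 2 → ℝ)) (T t : ℝ) : Fin 2 → ℝ :=
  (1 / bD f x₀ t) •
    ((-(alphaD f x₀ T t)) • perp (f (x₀ t)) + betaD f x₀ t • f (x₀ t))

/-- Second covector `v₂(t) = (e^{μ₂ t}/b(t)) f⊥(x₀ t)`. -/
def v2D (f : (Fin 2 → ℝ) → (Fin 2 → ℝ)) (x₀ : ℝ → (Fin 2 → ℝ)) (T t : ℝ) : Fin 2 → ℝ :=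
  (Real.exp (mu2D f x₀ T * t) / bD f x₀ t) • perp (f (x₀ t))


/-!
Periodicity of `x₀` makes the integrand of `log b` periodic, so `b(t + T) = b(T) b(t)`.
The integrand of `a` then picks up the factor `b(T)` under the shift, whence
`a(t + T) = a(T) + b(T) a(t)`; the constant `a(T)/(b(T) − 1)` in `α` is exactly the one that turns
this into `α(t + T) = b(T) α(t)`. As `e^{μ₂ T} = b(T)`, the factor `e^{−μ₂ t}` in `u₂` absorbs
the growth of `α` and `β`.
-/

lemma intervalIntegral_add_period_eq {E : Type*} [NormedAddCommGroup E] [NormedSpace ℝ E]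
    {C : ℝ → E} (hC : Continuous C) {T k : ℝ} (hCT : ∀ s, C (s + T) = k • C s) (t : ℝ) :
    ∫ s in (0:ℝ)..t + T, C s = (∫ s in (0:ℝ)..T, C s) + k • ∫ s in (0:ℝ)..t, C s := by
  rw [← intervalIntegral.integral_add_adjacent_intervals (b := T)
    (hC.intervalIntegrable _ _) (hC.intervalIntegrable _ _), ← intervalIntegral.integral_smul]
  simp_rw [← hCT, intervalIntegral.integral_comp_add_right, zero_add]

lemma continuous_perp : Continuous perp :=
  (continuous_apply 1).matrixVecCons ((continuous_apply 0).neg.matrixVecCons continuous_const)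

section Diliberto

variable {f : (Fin 2 → ℝ) → (Fin 2 → ℝ)} {x₀ : ℝ → (Fin 2 → ℝ)} {T : ℝ}

lemma continuous_jac (hf : ContDiff ℝ 1 f) : Continuous (jac f) :=
  continuous_matrix fun i _ =>
    (continuous_apply i).comp ((hf.continuous_fderiv one_ne_zero).clm_apply continuous_const)

lemma continuous_divg (hf : ContDiff ℝ 1 f) : Continuous (divg f) :=
  (continuous_jac hf).matrix_trace

lemma continuous_bD (hf : ContDiff ℝ 1 f) (hx₀ : Continuous x₀) : Continuous (bD f x₀) :=
  Real.continuous_exp.comp <| intervalIntegral.continuous_primitive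
    (fun _ _ => ((continuous_divg hf).comp hx₀).intervalIntegrable _ _) 0

lemma continuous_aD_integrand (hf : ContDiff ℝ 1 f) (hx₀ : Continuous x₀)
    (hfne : ∀ t, f (x₀ t) ≠ 0) :
    Continuous fun s => (f (x₀ s) ⬝ᵥ ((jac f (x₀ s) + (jac f (x₀ s))ᵀ).mulVec (perp (f (x₀ s)))) /
      (f (x₀ s) ⬝ᵥ f (x₀ s)) ^ 2) * bD f x₀ s := by
  have hF : Continuous fun s => f (x₀ s) := hf.continuous.comp hx₀
  have hJ : Continuous fun s => jac f (x₀ s) := (continuous_jac hf).comp hx₀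
  refine (Continuous.div ?_ ((hF.dotProduct hF).pow 2) fun s => ?_).mul (continuous_bD hf hx₀)
  · exact hF.dotProduct ((hJ.add hJ.matrix_transpose).matrix_mulVec (continuous_perp.comp hF))
  · exact pow_ne_zero 2 (dotProduct_self_eq_zero.not.mpr (hfne s))

lemma bD_add_period (hf : ContDiff ℝ 1 f) (hx₀ : Continuous x₀) (hper : ∀ t, x₀ (t + T) = x₀ t)
    (t : ℝ) : bD f x₀ (t + T) = bD f x₀ T * bD f x₀ t := by
  rw [bD, intervalIntegral_add_period_eq (C := fun s => divg f (x₀ s))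
    ((continuous_divg hf).comp hx₀) (k := 1) (fun s => by simp [hper]), one_smul, Real.exp_add,
    bD, bD]

lemma aD_add_period (hf : ContDiff ℝ 1 f) (hx₀ : Continuous x₀) (hfne : ∀ t, f (x₀ t) ≠ 0)
    (hper : ∀ t, x₀ (t + T) = x₀ t) (t : ℝ) :
    aD f x₀ (t + T) = aD f x₀ T + bD f x₀ T * aD f x₀ t :=
  intervalIntegral_add_period_eq (continuous_aD_integrand hf hx₀ hfne)
    (fun s => by rw [hper, bD_add_period hf hx₀ hper, smul_eq_mul]; ring) t

lemma exp_mu2D_mul (hT : T ≠ 0) : Real.exp (mu2D f x₀ T * T) = bD f x₀ T := by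
  rw [mu2D, bD, one_div, mul_comm, ← mul_assoc, mul_inv_cancel₀ hT, one_mul]

lemma alphaD_add_period (hf : ContDiff ℝ 1 f) (hx₀ : Continuous x₀) (hfne : ∀ t, f (x₀ t) ≠ 0)
    (hper : ∀ t, x₀ (t + T) = x₀ t) (hbT : bD f x₀ T ≠ 1) (t : ℝ) :
    alphaD f x₀ T (t + T) = alphaD f x₀ T t * bD f x₀ T := by
  have hbT_sub : bD f x₀ T - 1 ≠ 0 := sub_ne_zero.mpr hbT
  rw [alphaD, alphaD, aD_add_period hf hx₀ hfne hper]
  field_simp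
  ring

lemma betaD_add_period (hf : ContDiff ℝ 1 f) (hx₀ : Continuous x₀)
    (hper : ∀ t, x₀ (t + T) = x₀ t) (t : ℝ) :
    betaD f x₀ (t + T) = betaD f x₀ t * bD f x₀ T := by
  rw [betaD, betaD, hper, bD_add_period hf hx₀ hper]
  ring

end Diliberto

/-- **periodicity of the Floquet eigenvectors.** If `x₀` is `T`-periodic
and `b(T) ≠ 1`, then `α(t+T) = α(t) e^{μ₂ T}`, `β(t+T) = β(t) e^{μ₂ T}`, and both
`u₁` and `u₂` are `T`-periodic. -/
theorem floquet_eigenvectors_periodic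
    (f : (Fin 2 → ℝ) → (Fin 2 → ℝ)) (x₀ : ℝ → (Fin 2 → ℝ)) (T : ℝ)
    (hf : ContDiff ℝ 1 f)
    (hx : ∀ t, HasDerivAt x₀ (f (x₀ t)) t)
    (hfne : ∀ t, f (x₀ t) ≠ 0)
    (hT : 0 < T)
    (hper : ∀ t, x₀ (t + T) = x₀ t)
    (hbT : bD f x₀ T ≠ 1) :
    (∀ t, alphaD f x₀ T (t + T) = alphaD f x₀ T t * Real.exp (mu2D f x₀ T * T)) ∧
    (∀ t, betaD f x₀ (t + T) = betaD f x₀ t * Real.exp (mu2D f x₀ T * T)) ∧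
    (∀ t, u1D f x₀ (t + T) = u1D f x₀ t) ∧
    (∀ t, u2D f x₀ T (t + T) = u2D f x₀ T t) := by
  have hx₀ : Continuous x₀ := continuous_iff_continuousAt.2 fun t => (hx t).continuousAt
  have hexp := exp_mu2D_mul (f := f) (x₀ := x₀) hT.ne'
  have halpha := alphaD_add_period hf hx₀ hfne hper hbT
  have hbeta := betaD_add_period hf hx₀ hper
  refine ⟨by simpa only [hexp] using halpha, by simpa only [hexp] using hbeta,
    fun t => by rw [u1D, u1D, hper], fun t => ?_⟩
  have hdecay : Real.exp (-mu2D f x₀ T * (t + T)) * bD f x₀ T = Real.exp (-mu2D f x₀ T * t) := by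
    rw [← hexp, ← Real.exp_add]
    ring_nf
  rw [u2D, u2D, hper, halpha, hbeta, mul_comm (alphaD f x₀ T t), mul_comm (betaD f x₀ t),
    ← smul_smul, ← smul_smul, ← smul_add, smul_smul, hdecay]

end
end

section
/- (Theorem 3, second part.) The curve t ↦ (1/b(t)) f⊥(x₀(t)) is a solution of the adjoint equation ẏ(t) = −A(t)ᵀ y(t); equivalently, the covector v₂(t) := (e^{μ₂ t}/b(t)) f⊥(x₀(t)) is a Floquet eigensolution of the adjoint problem with exponent −μ₂. -/
open Matrix

noncomputable section

/-- Auxiliary: the fderiv applied to a vector equals the Jacobian matrix times the vector. -/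
lemma fderiv_apply_eq_mulVec (f : (Fin 2 → ℝ) → (Fin 2 → ℝ)) (x v : Fin 2 → ℝ) :
    fderiv ℝ f x v = (jac f x).mulVec v := by
  have hv : v = v 0 • (Pi.single 0 1 : Fin 2 → ℝ) + v 1 • (Pi.single 1 1 : Fin 2 → ℝ) := by
    funext i; fin_cases i <;> simp
  conv_lhs => rw [hv]
  rw [map_add, _root_.map_smul, _root_.map_smul]
  funext i
  simp [jac, Matrix.mulVec, dotProduct, Fin.sum_univ_two, mul_comm]

/-- Auxiliary: continuity of the divergence along the orbit. -/
lemma continuous_divg_comp (f : (Fin 2 → ℝ) → (Fin 2 → ℝ)) (x₀ : ℝ → (Fin 2 → ℝ))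
    (hf : ContDiff ℝ 1 f) (hcx : Continuous x₀) :
    Continuous fun s => divg f (x₀ s) := by
  have h1 : Continuous fun s => fderiv ℝ f (x₀ s) :=
    (hf.continuous_fderiv one_ne_zero).comp hcx
  have h2 : ∀ (u : Fin 2 → ℝ) (i : Fin 2),
      Continuous fun s => fderiv ℝ f (x₀ s) u i := fun u i =>
    (continuous_apply i).comp
      ((ContinuousLinearMap.apply ℝ (Fin 2 → ℝ) u).continuous.comp h1)
  simp only [divg, jac, Matrix.trace, Matrix.diag, Fin.sum_univ_two, Matrix.of_apply]
  exact (h2 _ 0).add (h2 _ 1)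

/-- Auxiliary: derivative of `bD`. -/
lemma hasDerivAt_bD (f : (Fin 2 → ℝ) → (Fin 2 → ℝ)) (x₀ : ℝ → (Fin 2 → ℝ))
    (hc : Continuous fun s => divg f (x₀ s)) (t : ℝ) :
    HasDerivAt (bD f x₀) (divg f (x₀ t) * bD f x₀ t) t := by
  have hI : HasDerivAt (fun τ => ∫ s in (0:ℝ)..τ, divg f (x₀ s)) (divg f (x₀ t)) t :=
    intervalIntegral.integral_hasDerivAt_right (hc.intervalIntegrable 0 t)
      (hc.stronglyMeasurableAtFilter _ _) hc.continuousAt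
  have := hI.exp
  unfold bD
  simpa [mul_comm] using this

/-- **Theorem 3, second part.** The curve `t ↦ (1/b(t)) f⊥(x₀ t)`
solves the adjoint equation `ẏ = −A(t)ᵀ y`; equivalently, the covector
`v₂(t) = (e^{μ₂ t}/b(t)) f⊥(x₀ t)` is a Floquet eigensolution of the adjoint
problem with exponent `−μ₂`: the solution equals `e^{−μ₂ t} v₂(t)` with `v₂`
a `T`-periodic function. -/
theorem v2_floquet_eigensolution_adjoint
    (f : (Fin 2 → ℝ) → (Fin 2 → ℝ)) (x₀ : ℝ → (Fin 2 → ℝ)) (T : ℝ)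
    (hf : ContDiff ℝ 1 f)
    (hx : ∀ t, HasDerivAt x₀ (f (x₀ t)) t)
    (hfne : ∀ t, f (x₀ t) ≠ 0)
    (hT : 0 < T)
    (hper : ∀ t, x₀ (t + T) = x₀ t) :
    (∀ t, HasDerivAt (fun τ => (1 / bD f x₀ τ) • perp (f (x₀ τ)))
      ((-(jac f (x₀ t))ᵀ).mulVec ((1 / bD f x₀ t) • perp (f (x₀ t)))) t) ∧
    (∀ t, (1 / bD f x₀ t) • perp (f (x₀ t)) =
      Real.exp (-(mu2D f x₀ T) * t) • v2D f x₀ T t) ∧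
    (∀ t, v2D f x₀ T (t + T) = v2D f x₀ T t) := by
  have hcx : Continuous x₀ := by
    rw [continuous_iff_continuousAt]
    exact fun t => (hx t).continuousAt
  have hcdiv : Continuous fun s => divg f (x₀ s) := continuous_divg_comp f x₀ hf hcx
  have hb : ∀ t, HasDerivAt (bD f x₀) (divg f (x₀ t) * bD f x₀ t) t :=
    hasDerivAt_bD f x₀ hcdiv
  have hbpos : ∀ t, 0 < bD f x₀ t := fun t => Real.exp_pos _
  have hF : ∀ t, HasDerivAt (fun τ => f (x₀ τ)) ((jac f (x₀ t)).mulVec (f (x₀ t))) t := by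
    intro t
    have h := ((hf.differentiable one_ne_zero) (x₀ t)).hasFDerivAt.comp_hasDerivAt t (hx t)
    rwa [fderiv_apply_eq_mulVec] at h
  refine ⟨?_, ?_, ?_⟩
  · -- the adjoint equation
    intro t
    have hbne : bD f x₀ t ≠ 0 := (hbpos t).ne'
    have hinv : HasDerivAt (fun τ => 1 / bD f x₀ τ)
        (-(divg f (x₀ t) * bD f x₀ t) / bD f x₀ t ^ 2) t := by
      rw [show (fun τ => 1 / bD f x₀ τ) = fun τ => (bD f x₀ τ)⁻¹ from funext fun τ => one_div _]
      exact (hb t).inv hbne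
    have hFi : ∀ i, HasDerivAt (fun τ => f (x₀ τ) i)
        (((jac f (x₀ t)).mulVec (f (x₀ t))) i) t := fun i =>
      (hasDerivAt_pi.mp (hF t)) i
    have hd : divg f (x₀ t) = jac f (x₀ t) 0 0 + jac f (x₀ t) 1 1 := by
      simp [divg, Matrix.trace, Fin.sum_univ_two]
    have case0 : HasDerivAt (fun τ => ((1 / bD f x₀ τ) • perp (f (x₀ τ))) 0)
        (((-(jac f (x₀ t))ᵀ).mulVec ((1 / bD f x₀ t) • perp (f (x₀ t)))) 0) t := by
      have h := hinv.mul (hFi 1)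
      have heq : (fun τ => ((1 / bD f x₀ τ) • perp (f (x₀ τ))) 0) =
          fun τ => (1 / bD f x₀ τ) * f (x₀ τ) 1 := by
        funext τ; simp [perp]
      have : ((-(jac f (x₀ t))ᵀ).mulVec ((1 / bD f x₀ t) • perp (f (x₀ t)))) 0 =
          -(divg f (x₀ t) * bD f x₀ t) / bD f x₀ t ^ 2 * f (x₀ t) 1 +
            1 / bD f x₀ t * ((jac f (x₀ t)).mulVec (f (x₀ t))) 1 := by
        simp only [Matrix.mulVec, dotProduct, Fin.sum_univ_two, Matrix.neg_apply,
          Matrix.transpose_apply, Pi.smul_apply, smul_eq_mul, perp, hd,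
          Matrix.cons_val_zero, Matrix.cons_val_one, Matrix.head_cons]
        field_simp
        ring
      rw [this]
      exact heq ▸ h
    have case1 : HasDerivAt (fun τ => ((1 / bD f x₀ τ) • perp (f (x₀ τ))) 1)
        (((-(jac f (x₀ t))ᵀ).mulVec ((1 / bD f x₀ t) • perp (f (x₀ t)))) 1) t := by
      have h := hinv.mul ((hFi 0).neg)
      have heq : (fun τ => ((1 / bD f x₀ τ) • perp (f (x₀ τ))) 1) =
          fun τ => (1 / bD f x₀ τ) * (-(f (x₀ τ) 0)) := by
        funext τ; simp [perp]
      have : ((-(jac f (x₀ t))ᵀ).mulVec ((1 / bD f x₀ t) • perp (f (x₀ t)))) 1 =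
          -(divg f (x₀ t) * bD f x₀ t) / bD f x₀ t ^ 2 * (-(f (x₀ t) 0)) +
            1 / bD f x₀ t * (-(((jac f (x₀ t)).mulVec (f (x₀ t))) 0)) := by
        simp only [Matrix.mulVec, dotProduct, Fin.sum_univ_two, Matrix.neg_apply,
          Matrix.transpose_apply, Pi.smul_apply, smul_eq_mul, perp, hd,
          Matrix.cons_val_zero, Matrix.cons_val_one, Matrix.head_cons]
        field_simp
        ring
      rw [this]
      exact heq ▸ h
    rw [hasDerivAt_pi]
    intro i
    fin_cases i
    · exact case0
    · exact case1
  · -- the Floquet form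
    intro t
    rw [v2D, smul_smul]
    congr 1
    rw [mul_div_assoc', ← Real.exp_add, neg_mul, neg_add_cancel, Real.exp_zero]
  · -- periodicity of v₂
    intro t
    have h1 : ∫ s in T..(t + T), divg f (x₀ s) = ∫ s in (0:ℝ)..t, divg f (x₀ s) := by
      have h := intervalIntegral.integral_comp_add_right (a := (0:ℝ)) (b := t)
        (fun s => divg f (x₀ s)) T
      simp only [zero_add] at h
      rw [← h]
      simp only [hper]
    have hbTt : bD f x₀ (t + T) = bD f x₀ T * bD f x₀ t := by
      unfold bD
      rw [← Real.exp_add]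
      congr 1
      rw [← intervalIntegral.integral_add_adjacent_intervals
        (hcdiv.intervalIntegrable 0 T) (hcdiv.intervalIntegrable T (t + T)), h1]
    have hmuT : Real.exp (mu2D f x₀ T * T) = bD f x₀ T := by
      unfold mu2D bD
      congr 1
      field_simp
    have hscalar : Real.exp (mu2D f x₀ T * (t + T)) / bD f x₀ (t + T) =
        Real.exp (mu2D f x₀ T * t) / bD f x₀ t := by
      rw [show mu2D f x₀ T * (t + T) = mu2D f x₀ T * t + mu2D f x₀ T * T by ring,
        Real.exp_add, hmuT, hbTt]
      rw [mul_comm (bD f x₀ T) (bD f x₀ t), mul_div_mul_right _ _ (hbpos T).ne']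
    unfold v2D
    rw [hper t, hscalar]

end
end
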